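/- arXiv:2603.23196 — 5 statements merged into one kernel-verified Lean document; each statement's English description precedes it below -/
import Mathlib

section
/- Let h₁, …, h_m : K → ℝ be continuous functions on a compact metric space K, and let π be a Borel probability measure on K. Then there exists a discrete probability measure π̃ on K supported on at most m+1 points such that ∫ h_j dπ = ∫ h_j dπ̃ for all 1 ≤ j ≤ m. -/
/-!
The moment vector `F y = (h₁ y, …, h_m y)` is continuous on the compact space `K`, so its range
is compact, and in finite dimension so is the convex hull of that range (Carathéodory exhibits it
as a continuous image of a simplex times a power of the range). The integral of `F` against a
probability measure lies in this closed convex hull, and Carathéodory's theorem in `ℝ^m` writes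
it as a convex combination of `m + 1` values `F (x i)`: these weights and points are the discrete
measure.
-/

open MeasureTheory Set Module

section Caratheodory

variable {𝕜 E : Type*} [Field 𝕜] [LinearOrder 𝕜] [IsStrictOrderedRing 𝕜]
  [AddCommGroup E] [Module 𝕜 E]

theorem mem_convexHull_range_iff_exists_stdSimplex {ι : Type*} [Fintype ι] {z : ι → E} {x : E} :
    x ∈ convexHull 𝕜 (range z) ↔ ∃ w ∈ stdSimplex 𝕜 ι, ∑ i, w i • z i = x := by
  classical
  refine ⟨fun hx => ?_, fun ⟨w, ⟨hw₀, hw₁⟩, hx⟩ =>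
    mem_convexHull_of_exists_fintype w z hw₀ hw₁ (fun i => mem_range_self i) hx⟩
  rw [convexHull_range_eq_exists_affineCombination] at hx
  obtain ⟨s, w, hw₀, hw₁, rfl⟩ := hx
  refine ⟨fun i => if i ∈ s then w i else 0, ⟨fun i => ?_, ?_⟩, ?_⟩
  · dsimp only
    split_ifs with hi
    exacts [hw₀ i hi, le_rfl]
  · rw [Fintype.sum_extend_by_zero, hw₁]
  · simp_rw [ite_smul, zero_smul, Fintype.sum_extend_by_zero,
      s.affineCombination_eq_linear_combination z w hw₁]

theorem exists_stdSimplex_sum_smul_eq_of_mem_convexHull [FiniteDimensional 𝕜 E] {s : Set E}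
    {x : E} (hx : x ∈ convexHull 𝕜 s) {n : ℕ} (hn : finrank 𝕜 E ≤ n) :
    ∃ w ∈ stdSimplex 𝕜 (Fin (n + 1)), ∃ z : Fin (n + 1) → E, (∀ i, z i ∈ s) ∧
      ∑ i, w i • z i = x := by
  rw [convexHull_eq_union] at hx
  simp only [mem_iUnion] at hx
  obtain ⟨t, hts, ht_indep, hxt⟩ := hx
  have hcard : Fintype.card t ≤ n + 1 :=
    ht_indep.card_le_finrank_succ.trans (by simpa using (Submodule.finrank_le _).trans hn)
  have : Nonempty t := (convexHull_nonempty_iff.mp ⟨x, hxt⟩).to_subtype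
  -- Repeating points of `t` pads the Carathéodory family to exactly `n + 1` points.
  obtain ⟨σ, hσ⟩ : ∃ σ : Fin (n + 1) → t, σ.Surjective :=
    Function.exists_surjective_iff.mpr ⟨inferInstance,
      Function.Embedding.nonempty_of_card_le (by simpa using hcard)⟩
  have hrange : range (fun i => (σ i : E)) = t := by
    rw [range_comp' Subtype.val σ, hσ.range_eq, image_univ, Subtype.range_coe]
  rw [← hrange, mem_convexHull_range_iff_exists_stdSimplex] at hxt
  obtain ⟨w, hw, hwx⟩ := hxt
  exact ⟨w, hw, _, fun i => hts (σ i).2, hwx⟩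

end Caratheodory

theorem isCompact_convexHull {E : Type*} [AddCommGroup E] [Module ℝ E] [FiniteDimensional ℝ E]
    [TopologicalSpace E] [ContinuousAdd E] [ContinuousSMul ℝ E] {s : Set E} (hs : IsCompact s) :
    IsCompact (convexHull ℝ s) := by
  set ι := Fin (finrank ℝ E + 1)
  have hcomb : convexHull ℝ s = (fun q : (ι → ℝ) × (ι → E) => ∑ i, q.1 i • q.2 i) ''
      (stdSimplex ℝ ι ×ˢ univ.pi fun _ => s) := by
    refine Subset.antisymm (fun x hx => ?_) ?_
    · obtain ⟨w, hw, z, hzs, rfl⟩ := exists_stdSimplex_sum_smul_eq_of_mem_convexHull hx le_rfl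
      exact ⟨(w, z), ⟨hw, fun i _ => hzs i⟩, rfl⟩
    · rintro _ ⟨⟨w, z⟩, ⟨⟨hw₀, hw₁⟩, hz⟩, rfl⟩
      exact (convex_convexHull ℝ s).sum_mem (fun i _ => hw₀ i) hw₁
        fun i _ => subset_convexHull ℝ s (hz i (mem_univ i))
  rw [hcomb]
  exact ((isCompact_stdSimplex ℝ ι).prod (isCompact_univ_pi fun _ => hs)).image
    (by fun_prop)

theorem integral_mem_convexHull_range {K E : Type*} [TopologicalSpace K] [CompactSpace K]
    [MeasurableSpace K] [OpensMeasurableSpace K] [NormedAddCommGroup E] [NormedSpace ℝ E]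
    [FiniteDimensional ℝ E] {F : K → E} (hF : Continuous F) (μ : Measure K)
    [IsProbabilityMeasure μ] : ∫ y, F y ∂μ ∈ convexHull ℝ (range F) :=
  (convex_convexHull ℝ _).integral_mem (isCompact_convexHull (isCompact_range hF)).isClosed
    (Filter.Eventually.of_forall fun y => subset_convexHull ℝ _ (mem_range_self y))
    (hF.integrable_of_hasCompactSupport (HasCompactSupport.of_compactSpace F))

theorem exists_stdSimplex_sum_smul_eq_integral {K E : Type*} [TopologicalSpace K]
    [CompactSpace K] [MeasurableSpace K] [OpensMeasurableSpace K] [NormedAddCommGroup E]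
    [NormedSpace ℝ E] [FiniteDimensional ℝ E] {F : K → E} (hF : Continuous F) (μ : Measure K)
    [IsProbabilityMeasure μ] {n : ℕ} (hn : finrank ℝ E ≤ n) :
    ∃ w ∈ stdSimplex ℝ (Fin (n + 1)), ∃ x : Fin (n + 1) → K,
      ∑ i, w i • F (x i) = ∫ y, F y ∂μ := by
  obtain ⟨w, hw, z, hz, hwz⟩ :=
    exists_stdSimplex_sum_smul_eq_of_mem_convexHull (integral_mem_convexHull_range hF μ) hn
  choose x hx using hz
  exact ⟨w, hw, x, by simp_rw [hx, hwz]⟩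

/-- Moment matching with a discrete measure: given continuous functions `h₁,…,h_m` on a
compact metric space `K` and a Borel probability measure `π` on `K`, there is a discrete
probability measure with at most `m + 1` atoms matching all the integrals `∫ h_j dπ`. -/
theorem exists_discrete_moment_match {K : Type*} [MetricSpace K] [CompactSpace K]
    [MeasurableSpace K] [BorelSpace K]
    (m : ℕ) (h : Fin m → K → ℝ) (hc : ∀ j, Continuous (h j))
    (π : Measure K) [IsProbabilityMeasure π] :
    ∃ (p : Fin (m + 1) → ℝ) (x : Fin (m + 1) → K),
      (∀ i, 0 ≤ p i) ∧ (∑ i, p i = 1) ∧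
      ∀ j, ∫ y, h j y ∂π = ∑ i, p i * h j (x i) := by
  have hF : Continuous fun y j => h j y := continuous_pi hc
  obtain ⟨p, ⟨hp₀, hp₁⟩, x, hpx⟩ :=
    exists_stdSimplex_sum_smul_eq_integral hF π (finrank_fin_fun ℝ).le
  refine ⟨p, x, hp₀, hp₁, fun j => ?_⟩
  have hint := (ContinuousLinearMap.proj (R := ℝ) (φ := fun _ : Fin m => ℝ) j).integral_comp_comm
    (hF.integrable_of_hasCompactSupport (μ := π) (HasCompactSupport.of_compactSpace _))
  simp only [ContinuousLinearMap.proj_apply] at hint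
  rw [hint, ← hpx]
  simp [Finset.sum_apply]
end

section
/- Let X₁, …, X_n be data points in ℝ^d, let 𝓜 be the class of Gaussian location mixture densities f_μ(x) = (2π)^{-d/2} ∫ exp(-‖x-θ‖²/2) dμ(θ) over probability measures μ on ℝ^d, and let L̂_n(x₁,…,x_n) = sup_{f∈𝓜} (1/n) Σᵢ log f(xᵢ). Then the function (x₁,…,x_n) ↦ L̂_n(x₁,…,x_n) + (1/(2n)) Σᵢ ‖xᵢ‖² is convex on ℝ^{dn}; in particular L̂_n is differentiable Lebesgue-almost everywhere on ℝ^{dn}. -/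
open MeasureTheory Real

/-- The Gaussian location mixture density with mixing measure `μ` on `ℝ^d`. -/
noncomputable def gaussianMixture {d : ℕ} (μ : Measure (EuclideanSpace ℝ (Fin d)))
    (x : EuclideanSpace ℝ (Fin d)) : ℝ :=
  (2 * π) ^ (-(d : ℝ) / 2) * ∫ θ, Real.exp (-‖x - θ‖ ^ 2 / 2) ∂μ

/-- The optimal NPMLE log-likelihood `L̂ₙ`, as a function of the data `(x₁,…,xₙ)`. -/
noncomputable def optLogLik (d n : ℕ) (x : Fin n → EuclideanSpace ℝ (Fin d)) : ℝ :=
  ⨆ μ : ProbabilityMeasure (EuclideanSpace ℝ (Fin d)),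
    (1 / n : ℝ) * ∑ i, Real.log (gaussianMixture (μ : Measure _) (x i))

/-! Completing the square,
`log f_μ(x) + ‖x‖²/2 = log (2π)^{-d/2} + log ∫ exp(⟪x, θ⟫ - ‖θ‖²/2) dμ(θ)`,
and the last term is a log-Laplace transform, convex in `x` by Hölder's inequality. Averaging
over the data points keeps convexity, and so does the supremum over `μ`, which is finite because
`f_μ ≤ (2π)^{-d/2}`. A convex function on `ℝ^{dn}` is locally Lipschitz, hence differentiable
almost everywhere by Rademacher's theorem; `L̂ₙ` differs from it by a smooth function. -/

theorem LocallyLipschitz.ae_differentiableAt {E F : Type*} [NormedAddCommGroup E]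
    [NormedSpace ℝ E] [FiniteDimensional ℝ E] [MeasurableSpace E] [BorelSpace E]
    [NormedAddCommGroup F] [NormedSpace ℝ F] [FiniteDimensional ℝ F]
    (μ : Measure E) [μ.IsAddHaarMeasure] {f : E → F} (hf : LocallyLipschitz f) :
    ∀ᵐ x ∂μ, DifferentiableAt ℝ f x := by
  have hloc : ∀ x : E, ∃ (K : NNReal) (U : Set E), IsOpen U ∧ x ∈ U ∧ LipschitzOnWith K f U := by
    intro x
    obtain ⟨K, t, ht, hK⟩ := hf x
    exact ⟨K, interior t, isOpen_interior, mem_interior_iff_mem_nhds.2 ht,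
      hK.mono interior_subset⟩
  choose K U hUo hxU hfU using hloc
  obtain ⟨s, hsc, hsU⟩ := TopologicalSpace.isOpen_iUnion_countable U hUo
  have hae : ∀ᵐ y ∂μ, ∀ x ∈ s, y ∈ U x → DifferentiableWithinAt ℝ f (U x) y :=
    (ae_ball_iff hsc).2 fun x _ => (hfU x).ae_differentiableWithinAt_of_mem
  filter_upwards [hae] with y hy
  have hys : y ∈ ⋃ x ∈ s, U x := hsU ▸ Set.mem_iUnion.2 ⟨y, hxU y⟩
  obtain ⟨x, hx, hyx⟩ := Set.mem_iUnion₂.1 hys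
  exact (hy x hx hyx).differentiableAt ((hUo x).mem_nhds hyx)

theorem ConvexOn.ciSup {ι E : Type*} [Nonempty ι] [AddCommMonoid E] [Module ℝ E] {s : Set E}
    {f : ι → E → ℝ} (hf : ∀ i, ConvexOn ℝ s (f i))
    (hbdd : ∀ x ∈ s, BddAbove (Set.range fun i => f i x)) :
    ConvexOn ℝ s fun x => ⨆ i, f i x := by
  refine ⟨(hf (Classical.arbitrary ι)).1, fun x hx y hy a b ha hb hab => ciSup_le fun i => ?_⟩
  simp only [smul_eq_mul]
  calc f i (a • x + b • y) ≤ a * f i x + b * f i y := (hf i).2 hx hy ha hb hab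
    _ ≤ a * (⨆ i, f i x) + b * ⨆ i, f i y := by
      gcongr
      exacts [le_ciSup (hbdd x hx) i, le_ciSup (hbdd y hy) i]

theorem ConvexOn.fun_sum {ι E : Type*} [AddCommMonoid E] [Module ℝ E] {s : Set E}
    (hs : Convex ℝ s) (t : Finset ι) {f : ι → E → ℝ} (hf : ∀ i ∈ t, ConvexOn ℝ s (f i)) :
    ConvexOn ℝ s fun x => ∑ i ∈ t, f i x := by
  simp_rw [← Finset.sum_apply]
  exact Finset.sum_induction f (ConvexOn ℝ s) (fun _ _ => ConvexOn.add) (convexOn_const 0 hs) hf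

section Holder

variable {α : Type*} [MeasurableSpace α] {μ : Measure α} {f g : α → ℝ} {a b : ℝ}

theorem memLp_exp_mul (hf : Integrable (fun θ => exp (f θ)) μ) (ha : 0 < a) :
    MemLp (fun θ => exp (a * f θ)) (ENNReal.ofReal a⁻¹) μ := by
  have hfm : AEMeasurable f μ := by simpa using hf.aemeasurable.log
  rw [← integrable_norm_rpow_iff (hfm.const_mul a).exp.aestronglyMeasurable
    (by simpa using ha) ENNReal.ofReal_ne_top, ENNReal.toReal_ofReal (inv_nonneg.2 ha.le)]
  refine hf.congr (ae_of_all _ fun θ => ?_)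
  dsimp only
  rw [norm_of_nonneg (exp_pos _).le, ← exp_mul, mul_comm a, mul_inv_cancel_right₀ ha.ne']

theorem integral_exp_mul_add_mul_le (hf : Integrable (fun θ => exp (f θ)) μ)
    (hg : Integrable (fun θ => exp (g θ)) μ) (ha : 0 < a) (hb : 0 < b) (hab : a + b = 1) :
    ∫ θ, exp (a * f θ + b * g θ) ∂μ ≤ (∫ θ, exp (f θ) ∂μ) ^ a * (∫ θ, exp (g θ) ∂μ) ^ b := by
  have hpq : a⁻¹.HolderConjugate b⁻¹ := ⟨by simpa using hab, inv_pos.2 ha, inv_pos.2 hb⟩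
  have := integral_mul_le_Lp_mul_Lq_of_nonneg hpq (ae_of_all _ fun θ => (exp_pos _).le)
    (ae_of_all _ fun θ => (exp_pos _).le) (memLp_exp_mul hf ha) (memLp_exp_mul hg hb)
  simpa [← exp_add, ← exp_mul, mul_comm a, mul_comm b, ha.ne', hb.ne'] using this

end Holder

theorem convexOn_log_integral_exp_inner_add {E : Type*} [NormedAddCommGroup E]
    [InnerProductSpace ℝ E] [MeasurableSpace E] (μ : Measure E) [NeZero μ] (c : E → ℝ)
    (hint : ∀ v, Integrable (fun θ => exp (inner ℝ v θ + c θ)) μ) :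
    ConvexOn ℝ Set.univ fun v => log (∫ θ, exp (inner ℝ v θ + c θ) ∂μ) := by
  set I : E → ℝ := fun v => ∫ θ, exp (inner ℝ v θ + c θ) ∂μ
  have hI : ∀ v, 0 < I v := fun v => integral_exp_pos (hint v)
  refine convexOn_iff_forall_pos.2 ⟨convex_univ, fun x _ y _ a b ha hb hab => ?_⟩
  have hexp : ∀ θ, inner ℝ (a • x + b • y) θ + c θ =
      a * (inner ℝ x θ + c θ) + b * (inner ℝ y θ + c θ) := fun θ => by
    rw [inner_add_left, real_inner_smul_left, real_inner_smul_left]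
    linear_combination (c θ) * hab.symm
  have holder : I (a • x + b • y) ≤ I x ^ a * I y ^ b := by
    simpa only [I, hexp] using integral_exp_mul_add_mul_le (hint x) (hint y) ha hb hab
  calc log (I (a • x + b • y)) ≤ log (I x ^ a * I y ^ b) := log_le_log (hI _) holder
    _ = a * log (I x) + b * log (I y) := by
      rw [log_mul (rpow_pos_of_pos (hI x) a).ne' (rpow_pos_of_pos (hI y) b).ne',
        log_rpow (hI x), log_rpow (hI y)]

section GaussianMixture

variable {d : ℕ} (μ : Measure (EuclideanSpace ℝ (Fin d)))

theorem gaussianMixture_eq (v : EuclideanSpace ℝ (Fin d)) :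
    gaussianMixture μ v = (2 * π) ^ (-(d : ℝ) / 2) * exp (-‖v‖ ^ 2 / 2) *
      ∫ θ, exp (inner ℝ v θ + -‖θ‖ ^ 2 / 2) ∂μ := by
  have hsplit : ∀ θ, exp (-‖v - θ‖ ^ 2 / 2) =
      exp (-‖v‖ ^ 2 / 2) * exp (inner ℝ v θ + -‖θ‖ ^ 2 / 2) := fun θ => by
    rw [← exp_add, norm_sub_sq_real]
    ring_nf
  simp only [gaussianMixture, hsplit, integral_const_mul, mul_assoc]

theorem integrable_exp_inner_add_neg_sq [IsFiniteMeasure μ] (v : EuclideanSpace ℝ (Fin d)) :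
    Integrable (fun θ => exp (inner ℝ v θ + -‖θ‖ ^ 2 / 2)) μ := by
  refine Integrable.of_bound (by fun_prop) (exp (‖v‖ ^ 2 / 2)) (ae_of_all _ fun θ => ?_)
  rw [norm_of_nonneg (exp_pos _).le, exp_le_exp]
  nlinarith [real_inner_le_norm v θ, sq_nonneg (‖v‖ - ‖θ‖)]

theorem convexOn_log_gaussianMixture_add_sq [IsFiniteMeasure μ] [NeZero μ] :
    ConvexOn ℝ Set.univ fun v => log (gaussianMixture μ v) + ‖v‖ ^ 2 / 2 := by
  have hlog : ∀ v, log (gaussianMixture μ v) + ‖v‖ ^ 2 / 2 =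
      log ((2 * π) ^ (-(d : ℝ) / 2)) + log (∫ θ, exp (inner ℝ v θ + -‖θ‖ ^ 2 / 2) ∂μ) :=
    fun v => by
    rw [gaussianMixture_eq, log_mul (by positivity)
      (integral_exp_pos (integrable_exp_inner_add_neg_sq μ v)).ne', log_mul (by positivity)
      (exp_pos _).ne', log_exp]
    ring
  simp_rw [hlog]
  exact (convexOn_const _ convex_univ).add
    (convexOn_log_integral_exp_inner_add μ _ (integrable_exp_inner_add_neg_sq μ))

theorem gaussianMixture_pos [IsFiniteMeasure μ] [NeZero μ] (v : EuclideanSpace ℝ (Fin d)) :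
    0 < gaussianMixture μ v := by
  rw [gaussianMixture_eq]
  have := integral_exp_pos (integrable_exp_inner_add_neg_sq μ v)
  positivity

theorem gaussianMixture_le [IsProbabilityMeasure μ] (v : EuclideanSpace ℝ (Fin d)) :
    gaussianMixture μ v ≤ (2 * π) ^ (-(d : ℝ) / 2) := by
  have hint : ∫ θ, exp (-‖v - θ‖ ^ 2 / 2) ∂μ ≤ 1 := by
    have hle : ∀ θ, ‖exp (-‖v - θ‖ ^ 2 / 2)‖ ≤ 1 := fun θ => by
      rw [norm_of_nonneg (exp_pos _).le, exp_le_one_iff]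
      nlinarith [sq_nonneg ‖v - θ‖]
    simpa using (le_abs_self _).trans (norm_integral_le_of_norm_le_const (ae_of_all μ hle))
  calc gaussianMixture μ v ≤ (2 * π) ^ (-(d : ℝ) / 2) * 1 := by
        unfold gaussianMixture; gcongr
    _ = _ := mul_one _

end GaussianMixture

noncomputable def avgLogLik {d n : ℕ} (μ : Measure (EuclideanSpace ℝ (Fin d)))
    (x : Fin n → EuclideanSpace ℝ (Fin d)) : ℝ :=
  (1 / n : ℝ) * ∑ i, log (gaussianMixture μ (x i))

section AvgLogLik

variable {d n : ℕ}

theorem convexOn_avgLogLik_add_sq (μ : Measure (EuclideanSpace ℝ (Fin d))) [IsFiniteMeasure μ]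
    [NeZero μ] :
    ConvexOn ℝ Set.univ fun x : Fin n → EuclideanSpace ℝ (Fin d) =>
      avgLogLik μ x + (1 / (2 * n) : ℝ) * ∑ i, ‖x i‖ ^ 2 := by
  have hsum : ∀ x : Fin n → EuclideanSpace ℝ (Fin d),
      avgLogLik μ x + (1 / (2 * n) : ℝ) * ∑ i, ‖x i‖ ^ 2 =
        (1 / n : ℝ) • ∑ i, (log (gaussianMixture μ (x i)) + ‖x i‖ ^ 2 / 2) := fun x => by
    rw [avgLogLik, Finset.sum_add_distrib, ← Finset.sum_div, smul_eq_mul]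
    ring
  simp_rw [hsum]
  exact (ConvexOn.fun_sum convex_univ _ fun i _ =>
    (convexOn_log_gaussianMixture_add_sq μ).comp_linearMap
      (LinearMap.proj (R := ℝ) (φ := fun _ : Fin n => EuclideanSpace ℝ (Fin d)) i)).smul
    (by positivity)

theorem bddAbove_range_avgLogLik (x : Fin n → EuclideanSpace ℝ (Fin d)) :
    BddAbove (Set.range fun μ : ProbabilityMeasure (EuclideanSpace ℝ (Fin d)) =>
      avgLogLik (μ : Measure (EuclideanSpace ℝ (Fin d))) x) :=
  ⟨(1 / n : ℝ) * ∑ _i : Fin n, log ((2 * π) ^ (-(d : ℝ) / 2)), Set.forall_mem_range.2 fun μ =>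
    mul_le_mul_of_nonneg_left (Finset.sum_le_sum fun i _ =>
      log_le_log (gaussianMixture_pos _ _) (gaussianMixture_le _ _)) (by positivity)⟩

end AvgLogLik

theorem convexOn_optLogLik_add_sq_general (d n : ℕ) :
    ConvexOn ℝ Set.univ
      (fun x : Fin n → EuclideanSpace ℝ (Fin d) =>
        optLogLik d n x + (1 / (2 * n) : ℝ) * ∑ i, ‖x i‖ ^ 2)
    ∧ ∀ᵐ x : Fin n → EuclideanSpace ℝ (Fin d),
        DifferentiableAt ℝ (optLogLik d n) x := by
  have : Nonempty (ProbabilityMeasure (EuclideanSpace ℝ (Fin d))) :=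
    ⟨⟨Measure.dirac 0, inferInstance⟩⟩
  set q : (Fin n → EuclideanSpace ℝ (Fin d)) → ℝ := fun x => (1 / (2 * n) : ℝ) * ∑ i, ‖x i‖ ^ 2
  have hconv : ConvexOn ℝ Set.univ fun x => optLogLik d n x + q x := by
    have hsup : (fun x => optLogLik d n x + q x) =
        fun x => ⨆ μ : ProbabilityMeasure (EuclideanSpace ℝ (Fin d)),
          (avgLogLik (μ : Measure (EuclideanSpace ℝ (Fin d))) x + q x) :=
      funext fun x => ciSup_add (bddAbove_range_avgLogLik x) (q x)
    rw [hsup]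
    exact ConvexOn.ciSup (fun μ => convexOn_avgLogLik_add_sq _) fun x _ =>
      (bddAbove_range_avgLogLik x).range_comp_left (monotone_id.add_const (q x))
  have hq : Differentiable ℝ q :=
    (Differentiable.fun_sum fun i _ => (differentiable_apply i).norm_sq ℝ).const_mul _
  refine ⟨hconv, ?_⟩
  filter_upwards [hconv.locallyLipschitz.ae_differentiableAt volume] with x hx
  exact (hq x).fun_add_iff_left.1 hx

/-- The function `(x₁,…,xₙ) ↦ L̂ₙ(x₁,…,xₙ) + (1/(2n)) ∑ᵢ ‖xᵢ‖²` is convex on `ℝ^{dn}`;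
in particular `L̂ₙ` is differentiable Lebesgue-almost everywhere. -/
theorem convexOn_optLogLik_add_sq (d n : ℕ) (hn : 0 < n) :
    ConvexOn ℝ Set.univ
      (fun x : Fin n → EuclideanSpace ℝ (Fin d) =>
        optLogLik d n x + (1 / (2 * n) : ℝ) * ∑ i, ‖x i‖ ^ 2)
    ∧ ∀ᵐ x : Fin n → EuclideanSpace ℝ (Fin d),
        DifferentiableAt ℝ (optLogLik d n) x :=
  convexOn_optLogLik_add_sq_general d n
end

section
/- Let μ_* be a probability measure supported in a compact set Θ ⊂ ℝ^d, let f_* be the Gaussian location mixture density with mixing measure μ_*, and let X₁, …, X_n be i.i.d. samples from f_*. Set M = 3√(log n) and Θ_M = {x : dist(x, Θ) ≤ M}. Then E[ ∏ᵢ (1 + n² 𝟙(Xᵢ ∉ Θ_M)) ] ≤ exp(exp(d)). -/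
open MeasureTheory Real ProbabilityTheory

/-!
By independence the expectation factors into `∏ᵢ (1 + n² P(Xᵢ ∉ Θ_M))`. If `θ ∈ Θ` and
`x ∉ Θ_M`, then `‖x - θ‖ > M`, and there `e^{-‖x-θ‖²/2} ≤ e^{-M²/3} e^{-‖x-θ‖²/6}`;
integrating the wider Gaussian gives `P(Xᵢ ∉ Θ_M) ≤ 3^{d/2} e^{-M²/3} ≤ e^d n⁻³`.
Each factor is therefore at most `1 + e^d / n ≤ exp (e^d / n)`.
-/

section GaussianIntegral

variable {V : Type*} [NormedAddCommGroup V] [InnerProductSpace ℝ V] [FiniteDimensional ℝ V]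
  [MeasurableSpace V] [BorelSpace V]

lemma lintegral_ofReal_exp_neg_mul_sq_norm_sub {b : ℝ} (hb : 0 < b) (θ : V) :
    ∫⁻ x, ENNReal.ofReal (rexp (-b * ‖x - θ‖ ^ 2))
      = ENNReal.ofReal ((π / b) ^ (Module.finrank ℝ V / 2 : ℝ)) := by
  have hintegral :
      ∫ x, rexp (-b * ‖x - θ‖ ^ 2) = (π / b) ^ (Module.finrank ℝ V / 2 : ℝ) := by
    rw [integral_sub_right_eq_self (fun x => rexp (-b * ‖x‖ ^ 2)) θ,
      GaussianFourier.integral_rexp_neg_mul_sq_norm hb]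
  rw [← hintegral, ofReal_integral_eq_lintegral_ofReal]
  · exact Integrable.of_integral_ne_zero (by rw [hintegral]; positivity)
  · exact .of_forall fun x => (exp_pos _).le

end GaussianIntegral

lemma exp_neg_sq_div_two_le {M r : ℝ} (hM : 0 ≤ M) (hMr : M ≤ r) :
    rexp (-r ^ 2 / 2) ≤ rexp (-M ^ 2 / 3) * rexp (-(1 / 6) * r ^ 2) := by
  rw [← exp_add, exp_le_exp]
  nlinarith

lemma ofReal_gaussianMixture {d : ℕ} (μ : Measure (EuclideanSpace ℝ (Fin d)))
    [IsFiniteMeasure μ] (x : EuclideanSpace ℝ (Fin d)) :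
    ENNReal.ofReal (gaussianMixture μ x) = ENNReal.ofReal ((2 * π) ^ (-(d : ℝ) / 2)) *
      ∫⁻ θ, ENNReal.ofReal (rexp (-‖x - θ‖ ^ 2 / 2)) ∂μ := by
  have hint : Integrable (fun θ => rexp (-‖x - θ‖ ^ 2 / 2)) μ := by
    refine .of_bound (by fun_prop) 1 (.of_forall fun θ => ?_)
    rw [norm_of_nonneg (exp_pos _).le, exp_le_one_iff]
    have := sq_nonneg ‖x - θ‖
    linarith
  rw [gaussianMixture, ENNReal.ofReal_mul (by positivity),
    ofReal_integral_eq_lintegral_ofReal hint (.of_forall fun θ => (exp_pos _).le)]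

lemma gaussianMixture_measure_compl_le {d : ℕ} {Θ : Set (EuclideanSpace ℝ (Fin d))}
    {μ : Measure (EuclideanSpace ℝ (Fin d))} [IsProbabilityMeasure μ] (hμ : μ Θᶜ = 0)
    {M : ℝ} (hM : 0 ≤ M) :
    volume.withDensity (fun x => ENNReal.ofReal (gaussianMixture μ x))
        {x | Metric.infDist x Θ ≤ M}ᶜ
      ≤ ENNReal.ofReal (3 ^ (d / 2 : ℝ) * rexp (-M ^ 2 / 3)) := by
  set S := {x : EuclideanSpace ℝ (Fin d) | Metric.infDist x Θ ≤ M}ᶜ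
  have hS : MeasurableSet S :=
    (measurableSet_le (Metric.continuous_infDist_pt Θ).measurable measurable_const).compl
  have hkernel : ∀ θ ∈ Θ, ∫⁻ x in S, ENNReal.ofReal (rexp (-‖x - θ‖ ^ 2 / 2))
      ≤ ENNReal.ofReal (rexp (-M ^ 2 / 3)) * ENNReal.ofReal ((6 * π) ^ (d / 2 : ℝ)) := by
    intro θ hθ
    calc ∫⁻ x in S, ENNReal.ofReal (rexp (-‖x - θ‖ ^ 2 / 2))
        ≤ ∫⁻ x in S, ENNReal.ofReal (rexp (-M ^ 2 / 3)) *
            ENNReal.ofReal (rexp (-(1 / 6) * ‖x - θ‖ ^ 2)) := by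
          refine setLIntegral_mono (by fun_prop) fun x hx => ?_
          have hMx : M ≤ ‖x - θ‖ := by
            rw [← dist_eq_norm]
            have hx' : M < Metric.infDist x Θ := not_le.mp hx
            exact hx'.le.trans (Metric.infDist_le_dist_of_mem hθ)
          rw [← ENNReal.ofReal_mul (exp_pos _).le]
          exact ENNReal.ofReal_le_ofReal (exp_neg_sq_div_two_le hM hMx)
      _ ≤ ∫⁻ x, ENNReal.ofReal (rexp (-M ^ 2 / 3)) *
            ENNReal.ofReal (rexp (-(1 / 6) * ‖x - θ‖ ^ 2)) := setLIntegral_le_lintegral _ _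
      _ = _ := by
          rw [lintegral_const_mul' _ _ ENNReal.ofReal_ne_top,
            lintegral_ofReal_exp_neg_mul_sq_norm_sub (by norm_num), finrank_euclideanSpace_fin,
            one_div, div_inv_eq_mul, mul_comm π]
  calc volume.withDensity (fun x => ENNReal.ofReal (gaussianMixture μ x)) S
      = ENNReal.ofReal ((2 * π) ^ (-(d : ℝ) / 2)) *
          ∫⁻ θ, (∫⁻ x in S, ENNReal.ofReal (rexp (-‖x - θ‖ ^ 2 / 2))) ∂μ := by
        simp_rw [withDensity_apply _ hS, ofReal_gaussianMixture]
        rw [lintegral_const_mul' _ _ ENNReal.ofReal_ne_top,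
          lintegral_lintegral_swap (by fun_prop)]
    _ ≤ ENNReal.ofReal ((2 * π) ^ (-(d : ℝ) / 2)) *
          (ENNReal.ofReal (rexp (-M ^ 2 / 3)) * ENNReal.ofReal ((6 * π) ^ (d / 2 : ℝ))) := by
        gcongr
        have hΘ : ∀ᵐ θ ∂μ, θ ∈ Θ := mem_ae_iff.mpr hμ
        refine (lintegral_mono_ae (hΘ.mono hkernel)).trans_eq ?_
        simp
    _ = ENNReal.ofReal (3 ^ (d / 2 : ℝ) * rexp (-M ^ 2 / 3)) := by
        rw [← ENNReal.ofReal_mul (by positivity), ← ENNReal.ofReal_mul (by positivity)]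
        congr 1
        rw [show 6 * π = 3 * (2 * π) by ring, mul_rpow (x := 3) (by norm_num) (by positivity),
          neg_div, rpow_neg (by positivity)]
        have h2π : (2 * π) ^ (d / 2 : ℝ) ≠ 0 := by positivity
        rw [inv_mul_eq_div, div_eq_iff h2π]
        ring

lemma three_rpow_div_two_le_exp {x : ℝ} (hx : 0 ≤ x) : (3 : ℝ) ^ (x / 2) ≤ rexp x := by
  have hlog : log 3 ≤ 2 := by
    rw [log_le_iff_le_exp (by norm_num)]
    linarith [add_one_le_exp (2 : ℝ)]
  rw [rpow_def_of_pos (by norm_num), exp_le_exp]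
  nlinarith

lemma sq_mul_exp_neg_three_mul_log {x : ℝ} (hx : 0 ≤ x) :
    x ^ 2 * rexp (-(3 * log x)) = x⁻¹ := by
  rcases hx.eq_or_lt with rfl | hx
  · simp
  rw [show 3 * log x = log (x ^ 3) by rw [log_pow]; norm_num, exp_neg, exp_log (by positivity)]
  field_simp

lemma integral_one_add_mul_ite {E : Type*} [MeasurableSpace E] {ν : Measure E}
    [IsProbabilityMeasure ν] {p : E → Prop} [DecidablePred p] (hp : MeasurableSet {x | p x})
    (c : ℝ) : ∫ x, (1 + c * if p x then 0 else 1) ∂ν = 1 + c * ν.real {x | p x}ᶜ := by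
  have hindicator :
      ∀ x, (if p x then (0 : ℝ) else 1) = {x | p x}ᶜ.indicator (fun _ => 1) x := fun x => by
    by_cases hx : p x <;> simp [hx]
  simp_rw [hindicator]
  rw [integral_add (integrable_const 1) (((integrable_const 1).indicator hp.compl).const_mul c),
    integral_const, integral_const_mul, integral_indicator_const _ hp.compl]
  simp

lemma sq_mul_gaussianMixture_measureReal_compl_le {d : ℕ}
    {Θ : Set (EuclideanSpace ℝ (Fin d))} {μ : Measure (EuclideanSpace ℝ (Fin d))}
    [IsProbabilityMeasure μ] (hμ : μ Θᶜ = 0) (n : ℕ) :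
    (n : ℝ) ^ 2 * (volume.withDensity fun x => ENNReal.ofReal (gaussianMixture μ x)).real
        {x | Metric.infDist x Θ ≤ 3 * √(log n)}ᶜ
      ≤ rexp d / n := by
  have hM : (3 * √(log n)) ^ 2 / 3 = 3 * log n := by
    rw [mul_pow, sq_sqrt (log_natCast_nonneg n)]
    ring
  have htail := ENNReal.toReal_le_of_le_ofReal (by positivity)
    (gaussianMixture_measure_compl_le hμ (M := 3 * √(log n)) (by positivity))
  rw [neg_div, hM] at htail
  calc (n : ℝ) ^ 2 * _ ≤ n ^ 2 * (rexp d * rexp (-(3 * log n))) := by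
        gcongr
        exact htail.trans (mul_le_mul_of_nonneg_right (three_rpow_div_two_le_exp d.cast_nonneg)
          (exp_pos _).le)
    _ = rexp d / n := by
        rw [mul_left_comm, sq_mul_exp_neg_three_mul_log n.cast_nonneg, div_eq_mul_inv]

lemma exp_div_pow_le_exp {a : ℝ} (ha : 0 ≤ a) (n : ℕ) : rexp (a / n) ^ n ≤ rexp a := by
  rw [← exp_nat_mul, exp_le_exp]
  rcases n.eq_zero_or_pos with rfl | hn
  · simpa using ha
  · rw [mul_div_cancel₀ _ (by positivity)]

theorem expectation_prod_indicator_bound_general {d : ℕ} (n : ℕ)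
    (Θ : Set (EuclideanSpace ℝ (Fin d)))
    (μstar : Measure (EuclideanSpace ℝ (Fin d))) [IsProbabilityMeasure μstar]
    (hsupp : μstar Θᶜ = 0)
    {Ω : Type*} [MeasurableSpace Ω] (P : Measure Ω)
    (X : Fin n → Ω → EuclideanSpace ℝ (Fin d))
    (hmeas : ∀ i, Measurable (X i))
    (hindep : iIndepFun X P)
    (hlaw : ∀ i, P.map (X i)
      = volume.withDensity fun x => ENNReal.ofReal (gaussianMixture μstar x)) :
    ∫ ω, (∏ i, (1 + (n : ℝ) ^ 2 *
        (if Metric.infDist (X i ω) Θ ≤ 3 * Real.sqrt (Real.log n) then 0 else 1))) ∂P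
      ≤ Real.exp (Real.exp d) := by
  have := hindep.isProbabilityMeasure
  set T := {x : EuclideanSpace ℝ (Fin d) | Metric.infDist x Θ ≤ 3 * √(log n)}
  have hT : MeasurableSet T :=
    measurableSet_le (Metric.continuous_infDist_pt Θ).measurable measurable_const
  set g : EuclideanSpace ℝ (Fin d) → ℝ := fun x => 1 + (n : ℝ) ^ 2 * if x ∈ T then 0 else 1
  have hg : Measurable g :=
    measurable_const.add (measurable_const.mul (measurable_const.ite hT measurable_const))
  have hfactor : ∀ i, ∫ ω, g (X i ω) ∂P ≤ rexp (rexp d / n) := fun i => by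
    have := Measure.isProbabilityMeasure_map (μ := P) (hmeas i).aemeasurable
    rw [hlaw i] at this
    rw [← integral_map (hmeas i).aemeasurable hg.aestronglyMeasurable, hlaw i]
    refine (integral_one_add_mul_ite hT _).trans_le ?_
    linarith [sq_mul_gaussianMixture_measureReal_compl_le hsupp n, add_one_le_exp (rexp d / n)]
  calc _ = ∏ i, ∫ ω, g (X i ω) ∂P :=
        hindep.integral_fun_prod_comp (f := fun _ => g) (fun i => (hmeas i).aemeasurable)
          fun _ => hg.aestronglyMeasurable
    _ ≤ ∏ _i : Fin n, rexp (rexp d / n) :=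
        Finset.prod_le_prod (fun i _ => integral_nonneg fun ω => by positivity)
          fun i _ => hfactor i
    _ ≤ rexp (rexp d) := by
        rw [Finset.prod_const, Finset.card_univ, Fintype.card_fin]
        exact exp_div_pow_le_exp (exp_pos d).le n

/-- For i.i.d. samples from a Gaussian mixture whose mixing measure is supported in a
compact set `Θ`, with `M = 3√(log n)` and `Θ_M` the `M`-fattening of `Θ`,
`E[∏ᵢ (1 + n² 𝟙(Xᵢ ∉ Θ_M))] ≤ exp(exp d)`. -/
theorem expectation_prod_indicator_bound {d : ℕ} (n : ℕ) (hn : 1 ≤ n)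
    (Θ : Set (EuclideanSpace ℝ (Fin d))) (hΘ : IsCompact Θ)
    (μstar : Measure (EuclideanSpace ℝ (Fin d))) [IsProbabilityMeasure μstar]
    (hsupp : μstar Θᶜ = 0)
    {Ω : Type*} [MeasurableSpace Ω] (P : Measure Ω) [IsProbabilityMeasure P]
    (X : Fin n → Ω → EuclideanSpace ℝ (Fin d))
    (hmeas : ∀ i, Measurable (X i))
    (hindep : iIndepFun X P)
    (hlaw : ∀ i, P.map (X i)
      = volume.withDensity fun x => ENNReal.ofReal (gaussianMixture μstar x)) :
    ∫ ω, (∏ i, (1 + (n : ℝ) ^ 2 *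
        (if Metric.infDist (X i ω) Θ ≤ 3 * Real.sqrt (Real.log n) then 0 else 1))) ∂P
      ≤ Real.exp (Real.exp d) :=
  expectation_prod_indicator_bound_general n Θ μstar hsupp P X hmeas hindep hlaw
end

section
/- Let Θ ⊂ ℝ^d be compact, τ ∈ (0,1], and let 𝓜(Θ;τ) be the class of Gaussian location mixture densities f whose mixing measure μ_f satisfies μ_f(Θ) ≥ τ. Then there exist constants C₁, C₂ > 0 (depending only on Θ, d, τ) such that for every f ∈ 𝓜(Θ;τ) and every x ∈ ℝ^d, ‖∇ log f(x)‖ ≤ C₁‖x‖ + C₂. -/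
/-!
With `w_x θ = exp (-‖x - θ‖² / 2)`, the gradient of `log f` at `x` is
`-(∫ ⟪x - θ, ·⟫ w_x θ dμ) / ∫ w_x dμ`. Since `t ↦ t e^{-t²/2}` decreases on `[1, ∞)`, for
`A ≥ 1` we have `‖x - θ‖ w_x θ ≤ A w_x θ + A e^{-A²/2}`, hence
`‖∇ log f x‖ ≤ A + A e^{-A²/2} / ∫ w_x dμ`. The mass `τ` on `Θ ⊆ B(0, R)` gives
`∫ w_x dμ ≥ τ e^{-(‖x‖ + R)²/2}`, which dominates `e^{-A²/2}` once
`A = ‖x‖ + R + √(-2 log τ) + 1`; so `‖∇ log f x‖ ≤ 2 A`.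
-/

open MeasureTheory Real

lemma mul_exp_neg_sq_div_two_le_one (t : ℝ) : t * exp (-t ^ 2 / 2) ≤ 1 := by
  have h : t ≤ exp (t ^ 2 / 2) := by
    nlinarith [add_one_le_exp (t ^ 2 / 2), sq_nonneg (t - 1)]
  rwa [← le_div_iff₀ (exp_pos _), one_div, ← exp_neg, neg_div, neg_neg]

lemma hasDerivAt_mul_exp_neg_sq_div_two (t : ℝ) :
    HasDerivAt (fun t : ℝ => t * exp (-t ^ 2 / 2)) ((1 - t ^ 2) * exp (-t ^ 2 / 2)) t := by
  have h : HasDerivAt (fun t : ℝ => -t ^ 2 / 2) (-t) t :=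
    ((hasDerivAt_pow 2 t).fun_neg.div_const 2).congr_deriv (by norm_num; ring)
  exact ((hasDerivAt_id' t).fun_mul h.exp).congr_deriv (by ring)

lemma antitoneOn_mul_exp_neg_sq_div_two :
    AntitoneOn (fun t : ℝ => t * exp (-t ^ 2 / 2)) (Set.Ici 1) := by
  refine antitoneOn_of_deriv_nonpos (convex_Ici 1) (by fun_prop) (by fun_prop) fun t ht => ?_
  rw [interior_Ici, Set.mem_Ioi] at ht
  rw [(hasDerivAt_mul_exp_neg_sq_div_two t).deriv]
  exact mul_nonpos_of_nonpos_of_nonneg (by nlinarith) (exp_pos _).le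

lemma mul_exp_neg_sq_div_two_le_add {A : ℝ} (hA : 1 ≤ A) (t : ℝ) :
    t * exp (-t ^ 2 / 2) ≤ A * exp (-t ^ 2 / 2) + A * exp (-A ^ 2 / 2) := by
  rcases le_or_gt t A with htA | hAt
  · nlinarith [exp_pos (-t ^ 2 / 2), exp_pos (-A ^ 2 / 2)]
  · have := antitoneOn_mul_exp_neg_sq_div_two (Set.mem_Ici.2 hA)
      (Set.mem_Ici.2 (hA.trans hAt.le)) hAt.le
    nlinarith [exp_pos (-t ^ 2 / 2)]

lemma exp_neg_sq_div_two_le_of_add_le {a b c : ℝ} (ha : 0 ≤ a) (hb : 0 ≤ b) (h : a + b ≤ c) :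
    exp (-c ^ 2 / 2) ≤ exp (-a ^ 2 / 2) * exp (-b ^ 2 / 2) := by
  rw [← exp_add, exp_le_exp]
  nlinarith [mul_nonneg ha hb]

section GaussianKernel

variable {E : Type*} [NormedAddCommGroup E]

section

variable [MeasurableSpace E] [OpensMeasurableSpace E] [SecondCountableTopology E]
  (μ : Measure E) [IsFiniteMeasure μ]

lemma integrable_exp_neg_norm_sub_sq_div_two (x : E) :
    Integrable (fun θ => exp (-‖x - θ‖ ^ 2 / 2)) μ := by
  refine (integrable_const (1 : ℝ)).mono' (by fun_prop) (ae_of_all _ fun θ => ?_)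
  rw [norm_of_nonneg (exp_pos _).le, exp_le_one_iff]
  linarith [sq_nonneg ‖x - θ‖]

lemma measureReal_mul_exp_le_integral_exp_neg_norm_sub_sq_div_two {Θ : Set E}
    (hΘ : MeasurableSet Θ) {R : ℝ} (hR : ∀ θ ∈ Θ, ‖θ‖ ≤ R) (x : E) :
    μ.real Θ * exp (-(‖x‖ + R) ^ 2 / 2) ≤ ∫ θ, exp (-‖x - θ‖ ^ 2 / 2) ∂μ := by
  have hw := integrable_exp_neg_norm_sub_sq_div_two μ x
  have hclose (θ : E) (hθ : θ ∈ Θ) : exp (-(‖x‖ + R) ^ 2 / 2) ≤ exp (-‖x - θ‖ ^ 2 / 2) := by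
    have : ‖x - θ‖ ≤ ‖x‖ + R := by linarith [norm_sub_le x θ, hR θ hθ]
    gcongr
  calc μ.real Θ * exp (-(‖x‖ + R) ^ 2 / 2) ≤ ∫ θ in Θ, exp (-‖x - θ‖ ^ 2 / 2) ∂μ := by
        rw [mul_comm]
        exact setIntegral_ge_of_const_le_real hΘ (measure_ne_top μ Θ) hclose hw.integrableOn
    _ ≤ ∫ θ, exp (-‖x - θ‖ ^ 2 / 2) ∂μ :=
        setIntegral_le_integral hw (ae_of_all _ fun θ => (exp_pos _).le)

end

section

variable [InnerProductSpace ℝ E]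

lemma hasFDerivAt_neg_norm_sub_sq_div_two (θ x : E) :
    HasFDerivAt (fun y => -‖y - θ‖ ^ 2 / 2) (-innerSL ℝ (x - θ)) x := by
  refine ((((hasFDerivAt_id x).sub_const θ).norm_sq.mul_const (-(1 / 2) : ℝ)).congr_fderiv ?_)
    |>.congr_of_eventuallyEq (.of_forall fun y => by simp only [id]; ring)
  ext v
  simp

lemma hasFDerivAt_exp_neg_norm_sub_sq_div_two (θ x : E) :
    HasFDerivAt (fun y => exp (-‖y - θ‖ ^ 2 / 2))
      (-exp (-‖x - θ‖ ^ 2 / 2) • innerSL ℝ (x - θ)) x := by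
  simpa only [smul_neg, neg_smul] using (hasFDerivAt_neg_norm_sub_sq_div_two θ x).exp

lemma norm_exp_neg_norm_sub_sq_div_two_smul_innerSL (θ x : E) :
    ‖-exp (-‖x - θ‖ ^ 2 / 2) • innerSL ℝ (x - θ)‖ = ‖x - θ‖ * exp (-‖x - θ‖ ^ 2 / 2) := by
  rw [norm_smul, innerSL_apply_norm, norm_neg, norm_of_nonneg (exp_pos _).le, mul_comm]

end

variable [InnerProductSpace ℝ E] [MeasurableSpace E] [OpensMeasurableSpace E]
  [SecondCountableTopology E] (μ : Measure E) [IsFiniteMeasure μ]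

lemma hasFDerivAt_integral_exp_neg_norm_sub_sq_div_two (x : E) :
    HasFDerivAt (fun y => ∫ θ, exp (-‖y - θ‖ ^ 2 / 2) ∂μ)
      (∫ θ, -exp (-‖x - θ‖ ^ 2 / 2) • innerSL ℝ (x - θ) ∂μ) x := by
  refine hasFDerivAt_integral_of_dominated_of_fderiv_le (bound := fun _ => 1)
    (Metric.ball_mem_nhds x one_pos) (.of_forall fun y => by fun_prop)
    (integrable_exp_neg_norm_sub_sq_div_two μ x) (by fun_prop) (ae_of_all _ fun θ y _ => ?_)
    (integrable_const 1) (ae_of_all _ fun θ y _ => hasFDerivAt_exp_neg_norm_sub_sq_div_two θ y)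
  rw [norm_exp_neg_norm_sub_sq_div_two_smul_innerSL]
  exact mul_exp_neg_sq_div_two_le_one _

lemma norm_integral_exp_neg_norm_sub_sq_div_two_smul_innerSL_le {A : ℝ} (hA : 1 ≤ A) (x : E) :
    ‖∫ θ, -exp (-‖x - θ‖ ^ 2 / 2) • innerSL ℝ (x - θ) ∂μ‖
      ≤ A * ∫ θ, exp (-‖x - θ‖ ^ 2 / 2) ∂μ + A * exp (-A ^ 2 / 2) * μ.real Set.univ := by
  have hw := integrable_exp_neg_norm_sub_sq_div_two μ x
  calc ‖∫ θ, -exp (-‖x - θ‖ ^ 2 / 2) • innerSL ℝ (x - θ) ∂μ‖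
      ≤ ∫ θ, ‖x - θ‖ * exp (-‖x - θ‖ ^ 2 / 2) ∂μ := by
        refine (norm_integral_le_integral_norm _).trans_eq
          (integral_congr_ae (ae_of_all _ fun θ => ?_))
        exact norm_exp_neg_norm_sub_sq_div_two_smul_innerSL θ x
    _ ≤ ∫ θ, (A * exp (-‖x - θ‖ ^ 2 / 2) + A * exp (-A ^ 2 / 2)) ∂μ :=
        integral_mono_of_nonneg (ae_of_all μ fun θ => by positivity)
          ((hw.const_mul A).add (integrable_const _))
          (ae_of_all _ fun θ => mul_exp_neg_sq_div_two_le_add hA _)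
    _ = A * ∫ θ, exp (-‖x - θ‖ ^ 2 / 2) ∂μ + A * exp (-A ^ 2 / 2) * μ.real Set.univ := by
        rw [integral_add (hw.const_mul A) (integrable_const _), integral_const_mul,
          integral_const, smul_eq_mul, mul_comm (μ.real _)]

end GaussianKernel

section GaussianMixture

variable {d : ℕ} (μ : Measure (EuclideanSpace ℝ (Fin d)))

lemma hasFDerivAt_log_gaussianMixture [IsFiniteMeasure μ] [NeZero μ]
    (x : EuclideanSpace ℝ (Fin d)) :
    HasFDerivAt (fun y => log (gaussianMixture μ y))
      ((∫ θ, exp (-‖x - θ‖ ^ 2 / 2) ∂μ)⁻¹ •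
        ∫ θ, -exp (-‖x - θ‖ ^ 2 / 2) • innerSL ℝ (x - θ) ∂μ) x := by
  have hc : 0 < (2 * π) ^ (-(d : ℝ) / 2) := by positivity
  have hI : 0 < ∫ θ, exp (-‖x - θ‖ ^ 2 / 2) ∂μ :=
    integral_exp_pos (integrable_exp_neg_norm_sub_sq_div_two μ x)
  have h := ((hasFDerivAt_integral_exp_neg_norm_sub_sq_div_two μ x).const_mul
    ((2 * π) ^ (-(d : ℝ) / 2))).log (mul_pos hc hI).ne'
  rwa [smul_smul, mul_inv_rev, inv_mul_cancel_right₀ hc.ne'] at h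

lemma norm_fderiv_log_gaussianMixture_le_two_mul [IsProbabilityMeasure μ] {A : ℝ} (hA : 1 ≤ A)
    (x : EuclideanSpace ℝ (Fin d)) (htail : exp (-A ^ 2 / 2) ≤ ∫ θ, exp (-‖x - θ‖ ^ 2 / 2) ∂μ) :
    ‖fderiv ℝ (fun y => log (gaussianMixture μ y)) x‖ ≤ 2 * A := by
  have hI : 0 < ∫ θ, exp (-‖x - θ‖ ^ 2 / 2) ∂μ := (exp_pos _).trans_le htail
  rw [(hasFDerivAt_log_gaussianMixture μ x).fderiv, norm_smul, norm_inv, norm_of_nonneg hI.le,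
    inv_mul_le_iff₀ hI]
  calc _ ≤ A * ∫ θ, exp (-‖x - θ‖ ^ 2 / 2) ∂μ + A * exp (-A ^ 2 / 2) * μ.real Set.univ :=
        norm_integral_exp_neg_norm_sub_sq_div_two_smul_innerSL_le μ hA x
    _ ≤ (∫ θ, exp (-‖x - θ‖ ^ 2 / 2) ∂μ) * (2 * A) := by
        rw [probReal_univ, mul_one]
        linarith [mul_le_mul_of_nonneg_left htail (zero_le_one.trans hA)]

end GaussianMixture

/-- Linear-growth bound on the gradient of the log-density, uniform over the class
`𝓜(Θ;τ)` of Gaussian mixtures whose mixing measure puts mass at least `τ` on the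
compact set `Θ`. -/
theorem norm_fderiv_log_gaussianMixture_le {d : ℕ}
    (Θ : Set (EuclideanSpace ℝ (Fin d))) (hΘ : IsCompact Θ)
    (τ : ℝ) (hτ : τ ∈ Set.Ioc (0 : ℝ) 1) :
    ∃ C₁ > (0 : ℝ), ∃ C₂ > (0 : ℝ),
      ∀ (μ : Measure (EuclideanSpace ℝ (Fin d))), IsProbabilityMeasure μ →
        ENNReal.ofReal τ ≤ μ Θ →
        ∀ x, ‖fderiv ℝ (fun y => Real.log (gaussianMixture μ y)) x‖
          ≤ C₁ * ‖x‖ + C₂ := by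
  obtain ⟨R, hR, hΘR⟩ := hΘ.isBounded.exists_pos_norm_le
  set s := √(-2 * log τ)
  have hs0 : 0 ≤ s := sqrt_nonneg _
  have hs : exp (-s ^ 2 / 2) = τ := by
    rw [sq_sqrt (by nlinarith [log_nonpos hτ.1.le hτ.2])]
    simp [exp_log hτ.1]
  refine ⟨2, two_pos, 2 * (R + s + 1), by positivity, fun μ _ hμΘ x => ?_⟩
  have hτΘ : τ ≤ μ.real Θ := (ENNReal.ofReal_le_iff_le_toReal (measure_ne_top μ Θ)).1 hμΘ
  have htail : exp (-(‖x‖ + R + s + 1) ^ 2 / 2) ≤ ∫ θ, exp (-‖x - θ‖ ^ 2 / 2) ∂μ :=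
    calc exp (-(‖x‖ + R + s + 1) ^ 2 / 2) ≤ exp (-(‖x‖ + R) ^ 2 / 2) * exp (-s ^ 2 / 2) :=
          exp_neg_sq_div_two_le_of_add_le (by positivity) hs0 (by linarith)
      _ ≤ μ.real Θ * exp (-(‖x‖ + R) ^ 2 / 2) := by rw [hs, mul_comm]; gcongr
      _ ≤ ∫ θ, exp (-‖x - θ‖ ^ 2 / 2) ∂μ :=
          measureReal_mul_exp_le_integral_exp_neg_norm_sub_sq_div_two μ
            hΘ.isClosed.measurableSet hΘR x
  calc _ ≤ 2 * (‖x‖ + R + s + 1) :=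
        norm_fderiv_log_gaussianMixture_le_two_mul μ (by linarith [norm_nonneg x, hs0]) x htail
    _ = 2 * ‖x‖ + 2 * (R + s + 1) := by ring
end

section
/- Let μₙ be a sequence of probability measures on ℝ^d and μ a probability measure on ℝ^d, with associated Gaussian location mixture densities fₙ and f. If the squared Hellinger distance H²(fₙ, f) → 0, then fₙ(x) → f(x) for every x ∈ ℝ^d. -/
/-!
Hellinger convergence forces `L¹` convergence: `|f - g| = |√f - √g| (√f + √g)`, so by
Cauchy–Schwarz `‖f - g‖₁² ≤ H²(f, g) · ∫ (√f + √g)² ≤ 4 H²(f, g)` for probability densities.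
All Gaussian mixtures are Lipschitz with the same constant `(2π)^(-d/2)`, since the Gaussian
kernel is `1`-Lipschitz. For uniformly Lipschitz functions `L¹` convergence implies pointwise
convergence: if `|fₙ(x) - f(x)|` stayed large, it would stay large on a fixed ball around `x`.
-/

open MeasureTheory Real Filter

/-- The squared Hellinger distance between two densities on `ℝ^d`. -/
noncomputable def hellingerSq {d : ℕ} (f g : EuclideanSpace ℝ (Fin d) → ℝ) : ℝ :=
  ∫ x, (Real.sqrt (f x) - Real.sqrt (g x)) ^ 2

open Metric
open scoped NNReal Topology

section LipschitzL1

variable {X : Type*} [PseudoMetricSpace X] [ProperSpace X] [MeasurableSpace X]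
  [OpensMeasurableSpace X] {μ : Measure X} [IsFiniteMeasureOnCompacts μ]

lemma measureReal_ball_mul_sub_le_integral_abs {K : ℝ≥0} {h : X → ℝ} (hh : LipschitzWith K h)
    (hint : Integrable h μ) (x : X) (r : ℝ) :
    μ.real (ball x r) * (|h x| - K * r) ≤ ∫ y, |h y| ∂μ := by
  have hball : ∀ y ∈ ball x r, |h x| - K * r ≤ |h y| := fun y hy => by
    have hxy : |h x - h y| ≤ K * r := by
      rw [← Real.dist_eq]
      exact (hh.dist_le_mul x y).trans
        (mul_le_mul_of_nonneg_left (mem_ball'.1 hy).le K.coe_nonneg)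
    linarith [abs_sub_abs_le_abs_sub (h x) (h y)]
  calc μ.real (ball x r) * (|h x| - K * r) = ∫ _ in ball x r, (|h x| - K * r) ∂μ := by
        rw [setIntegral_const, smul_eq_mul]
    _ ≤ ∫ y in ball x r, |h y| ∂μ :=
        setIntegral_mono_on (integrableOn_const measure_ball_lt_top.ne) hint.abs.integrableOn
          measurableSet_ball hball
    _ ≤ ∫ y, |h y| ∂μ := setIntegral_le_integral hint.abs (.of_forall fun _ => abs_nonneg _)

theorem tendsto_of_lipschitzWith_of_tendsto_integral_abs [μ.IsOpenPosMeasure] {ι : Type*}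
    {l : Filter ι} {K : ℝ≥0} {h : ι → X → ℝ} (hh : ∀ i, LipschitzWith K (h i))
    (hint : ∀ i, Integrable (h i) μ) (hlim : Tendsto (fun i => ∫ y, |h i y| ∂μ) l (𝓝 0))
    (x : X) : Tendsto (fun i => h i x) l (𝓝 0) := by
  refine Metric.tendsto_nhds.2 fun ε hε => ?_
  set r := ε / (2 * (K + 1))
  have hKr : K * r < ε / 2 := by
    rw [mul_div_assoc', div_lt_div_iff₀ (by positivity) two_pos]
    nlinarith
  have hV : 0 < μ.real (ball x r) :=
    ENNReal.toReal_pos (measure_ball_pos μ x (by positivity)).ne' measure_ball_lt_top.ne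
  filter_upwards [hlim.eventually (gt_mem_nhds (mul_pos hV (half_pos hε)))] with i hi
  have hbound := (measureReal_ball_mul_sub_le_integral_abs (hh i) (hint i) x r).trans_lt hi
  rw [Real.dist_eq, sub_zero]
  linarith [lt_of_mul_lt_mul_left hbound hV.le]

end LipschitzL1

section Hellinger

variable {α : Type*} [MeasurableSpace α] {μ : Measure α} {f g : α → ℝ}

lemma sq_sqrt_add_sqrt_le {a b : ℝ} (ha : 0 ≤ a) (hb : 0 ≤ b) : (√a + √b) ^ 2 ≤ 2 * (a + b) := by
  nlinarith [sq_sqrt ha, sq_sqrt hb, sq_nonneg (√a - √b)]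

lemma sq_sqrt_sub_sqrt_le {a b : ℝ} (ha : 0 ≤ a) (hb : 0 ≤ b) : (√a - √b) ^ 2 ≤ 2 * (a + b) := by
  nlinarith [sq_sqrt ha, sq_sqrt hb, sq_nonneg (√a + √b)]

lemma integral_abs_sub_le_sqrt_mul_sqrt (hf0 : 0 ≤ f) (hg0 : 0 ≤ g) (hf : Integrable f μ)
    (hg : Integrable g μ) :
    ∫ x, |f x - g x| ∂μ ≤
      √(∫ x, (√(f x) - √(g x)) ^ 2 ∂μ) * √(2 * (∫ x, f x ∂μ + ∫ x, g x ∂μ)) := by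
  have hsf := continuous_sqrt.comp_aestronglyMeasurable hf.1
  have hsg := continuous_sqrt.comp_aestronglyMeasurable hg.1
  have hsum : Integrable (fun x => 2 * (f x + g x)) μ := (hf.add hg).const_mul 2
  have hsub : Integrable (fun x => (√(f x) - √(g x)) ^ 2) μ :=
    hsum.mono' ((hsf.sub hsg).pow 2) (.of_forall fun x => by
      rw [Real.norm_of_nonneg (sq_nonneg _)]; exact sq_sqrt_sub_sqrt_le (hf0 x) (hg0 x))
  have hadd : Integrable (fun x => (√(f x) + √(g x)) ^ 2) μ :=
    hsum.mono' ((hsf.add hsg).pow 2) (.of_forall fun x => by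
      rw [Real.norm_of_nonneg (sq_nonneg _)]; exact sq_sqrt_add_sqrt_le (hf0 x) (hg0 x))
  have hfactor : ∀ x, |f x - g x| = |√(f x) - √(g x)| * (√(f x) + √(g x)) := fun x => by
    rw [← abs_of_nonneg (by positivity : 0 ≤ √(f x) + √(g x)), ← abs_mul]
    congr 1
    linear_combination sq_sqrt (hg0 x) - sq_sqrt (hf0 x)
  have hholder := integral_mul_le_Lp_mul_Lq_of_nonneg Real.HolderConjugate.two_two
    (.of_forall fun x => abs_nonneg (√(f x) - √(g x)))
    (.of_forall fun x => (by positivity : 0 ≤ √(f x) + √(g x)))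
    (by
      rw [ENNReal.ofReal_ofNat]
      exact (memLp_two_iff_integrable_sq
        (continuous_abs.comp_aestronglyMeasurable (hsf.sub hsg))).2 (by simpa using hsub))
    (by rw [ENNReal.ofReal_ofNat]; exact (memLp_two_iff_integrable_sq (hsf.add hsg)).2 hadd)
  simp only [← hfactor, rpow_two, sq_abs, ← sqrt_eq_rpow] at hholder
  refine hholder.trans (mul_le_mul_of_nonneg_left (sqrt_le_sqrt ?_) (sqrt_nonneg _))
  rw [← integral_add hf hg, ← integral_const_mul]
  exact integral_mono hadd hsum fun x => sq_sqrt_add_sqrt_le (hf0 x) (hg0 x)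

theorem tendsto_integral_abs_sub_of_tendsto_integral_sq_sqrt_sub {ι : Type*} {l : Filter ι}
    {f : ι → α → ℝ} (hf0 : ∀ i, 0 ≤ f i) (hg0 : 0 ≤ g) (hf : ∀ i, Integrable (f i) μ)
    (hg : Integrable g μ) (hmass : ∀ i, ∫ x, f i x ∂μ = ∫ x, g x ∂μ)
    (hH : Tendsto (fun i => ∫ x, (√(f i x) - √(g x)) ^ 2 ∂μ) l (𝓝 0)) :
    Tendsto (fun i => ∫ x, |f i x - g x| ∂μ) l (𝓝 0) := by
  have hbound : Tendsto (fun i => √(∫ x, (√(f i x) - √(g x)) ^ 2 ∂μ) *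
      √(2 * (∫ x, g x ∂μ + ∫ x, g x ∂μ))) l (𝓝 0) := by
    simpa using hH.sqrt.mul_const _
  refine squeeze_zero (fun i => integral_nonneg fun _ => abs_nonneg _) (fun i => ?_) hbound
  simpa only [hmass i] using integral_abs_sub_le_sqrt_mul_sqrt (hf0 i) hg0 (hf i) hg

end Hellinger

lemma lipschitzWith_integral {X α E : Type*} [PseudoMetricSpace X] [MeasurableSpace α]
    [NormedAddCommGroup E] [NormedSpace ℝ E] {μ : Measure α} [IsProbabilityMeasure μ]
    {K : ℝ≥0} {F : X → α → E} (hF : ∀ θ, LipschitzWith K (F · θ))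
    (hint : ∀ x, Integrable (F x) μ) : LipschitzWith K fun x => ∫ θ, F x θ ∂μ :=
  LipschitzWith.of_dist_le_mul fun x y => by
    rw [dist_eq_norm, ← integral_sub (hint x) (hint y)]
    simpa using norm_integral_le_of_norm_le_const (μ := μ)
      (.of_forall fun θ => ((hF θ).dist_le_mul x y).trans_eq' (dist_eq_norm _ _))

section Gaussian

lemma lipschitzWith_one_exp_neg_sq_div_two : LipschitzWith 1 fun t : ℝ => exp (-t ^ 2 / 2) := by
  have hderiv : ∀ t : ℝ, HasDerivAt (fun t : ℝ => exp (-t ^ 2 / 2)) (exp (-t ^ 2 / 2) * (-t)) t :=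
    fun t => ((hasDerivAt_pow 2 t).neg.div_const 2).exp.congr_deriv
      (by simp only [Pi.neg_apply]; ring)
  refine lipschitzWith_of_nnnorm_deriv_le (fun t => (hderiv t).differentiableAt) fun t => ?_
  rw [(hderiv t).deriv, ← NNReal.coe_le_coe, coe_nnnorm, norm_mul, norm_neg, Real.norm_eq_abs,
    Real.norm_eq_abs, abs_exp, NNReal.coe_one, ← le_div_iff₀' (exp_pos _), one_div, ← exp_neg,
    neg_div, neg_neg]
  nlinarith [add_one_le_exp (t ^ 2 / 2), sq_abs t, sq_nonneg (|t| - 1)]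

variable {E : Type*} [NormedAddCommGroup E]

lemma lipschitzWith_one_exp_neg_norm_sq_div_two :
    LipschitzWith 1 fun v : E => exp (-‖v‖ ^ 2 / 2) := by
  have := lipschitzWith_one_exp_neg_sq_div_two.comp (lipschitzWith_one_norm (E := E))
  rwa [mul_one] at this

variable [InnerProductSpace ℝ E] [FiniteDimensional ℝ E] [MeasurableSpace E] [BorelSpace E]

lemma integral_exp_neg_norm_sq_div_two :
    ∫ v : E, exp (-‖v‖ ^ 2 / 2) = (2 * π) ^ (Module.finrank ℝ E / 2 : ℝ) := by
  have := GaussianFourier.integral_rexp_neg_mul_sq_norm (V := E) (by norm_num : (0:ℝ) < 1 / 2)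
  rw [div_div_eq_mul_div, div_one, mul_comm] at this
  simpa [neg_div, div_eq_inv_mul] using this

lemma integrable_exp_neg_norm_sq_div_two : Integrable fun v : E => exp (-‖v‖ ^ 2 / 2) :=
  .of_integral_ne_zero (by rw [integral_exp_neg_norm_sq_div_two]; positivity)

lemma integrable_exp_neg_norm_sub_sq_div_two_prod {μ : Measure E} [IsProbabilityMeasure μ] :
    Integrable (fun p : E × E => exp (-‖p.1 - p.2‖ ^ 2 / 2)) (volume.prod μ) := by
  refine (integrable_prod_iff' (by fun_prop)).2
    ⟨.of_forall fun θ => integrable_exp_neg_norm_sq_div_two.comp_sub_right θ, ?_⟩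
  simp_rw [norm_of_nonneg (exp_pos _).le,
    integral_sub_right_eq_self (fun v => exp (-‖v‖ ^ 2 / 2))]
  exact integrable_const _

end Gaussian

section GaussianMixture

variable {d : ℕ} (μ : Measure (EuclideanSpace ℝ (Fin d)))

lemma gaussianMixture_nonneg (x : EuclideanSpace ℝ (Fin d)) : 0 ≤ gaussianMixture μ x :=
  mul_nonneg (rpow_nonneg (by positivity) _) (integral_nonneg fun _ => (exp_pos _).le)

variable [IsProbabilityMeasure μ]

lemma lipschitzWith_gaussianMixture :
    LipschitzWith ‖(2 * π) ^ (-(d : ℝ) / 2)‖₊ (gaussianMixture μ) := by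
  have hint (x : EuclideanSpace ℝ (Fin d)) : Integrable (fun θ => exp (-‖x - θ‖ ^ 2 / 2)) μ :=
    .of_bound (by fun_prop) 1 (.of_forall fun θ => by
      rw [norm_of_nonneg (exp_pos _).le, exp_le_one_iff]
      nlinarith [sq_nonneg ‖x - θ‖])
  have hkernel := lipschitzWith_integral (fun θ => lipschitzWith_one_exp_neg_norm_sq_div_two.comp
    (IsometryEquiv.subRight θ).isometry.lipschitz) hint
  have := (lipschitzWith_smul ((2 * π) ^ (-(d : ℝ) / 2))).comp hkernel
  rwa [mul_one, mul_one] at this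

lemma integrable_gaussianMixture : Integrable (gaussianMixture μ) :=
  integrable_exp_neg_norm_sub_sq_div_two_prod.integral_prod_left.const_mul _

lemma integral_gaussianMixture : ∫ x, gaussianMixture μ x = 1 := by
  unfold gaussianMixture
  rw [integral_const_mul, integral_integral_swap integrable_exp_neg_norm_sub_sq_div_two_prod]
  simp_rw [integral_sub_right_eq_self (fun v => exp (-‖v‖ ^ 2 / 2)),
    integral_exp_neg_norm_sq_div_two, finrank_euclideanSpace_fin]
  rw [integral_const, probReal_univ, one_smul, neg_div, rpow_neg (by positivity),
    inv_mul_cancel₀ (by positivity)]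

end GaussianMixture

/-- If the squared Hellinger distance between Gaussian mixtures `fₙ` and `f` tends to
zero, then `fₙ(x) → f(x)` for every `x`. -/
theorem gaussianMixture_tendsto_of_hellinger {d : ℕ}
    (μn : ℕ → Measure (EuclideanSpace ℝ (Fin d)))
    (μ : Measure (EuclideanSpace ℝ (Fin d)))
    [∀ n, IsProbabilityMeasure (μn n)] [IsProbabilityMeasure μ]
    (h : Tendsto (fun n => hellingerSq (gaussianMixture (μn n)) (gaussianMixture μ))
      atTop (nhds 0)) :
    ∀ x, Tendsto (fun n => gaussianMixture (μn n) x) atTop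
      (nhds (gaussianMixture μ x)) := by
  intro x
  have hL1 : Tendsto (fun n => ∫ y, |gaussianMixture (μn n) y - gaussianMixture μ y|) atTop
      (𝓝 0) :=
    tendsto_integral_abs_sub_of_tendsto_integral_sq_sqrt_sub
      (fun n => gaussianMixture_nonneg (μn n)) (gaussianMixture_nonneg μ)
      (fun n => integrable_gaussianMixture (μn n)) (integrable_gaussianMixture μ)
      (fun n => by rw [integral_gaussianMixture, integral_gaussianMixture]) h
  rw [← tendsto_sub_nhds_zero_iff]
  exact tendsto_of_lipschitzWith_of_tendsto_integral_abs
    (fun n => (lipschitzWith_gaussianMixture (μn n)).sub (lipschitzWith_gaussianMixture μ))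
    (fun n => (integrable_gaussianMixture (μn n)).sub (integrable_gaussianMixture μ)) hL1 x
end
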